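/- arXiv:1212.4742 — 4 statements merged into one kernel-verified Lean document; each statement's English description precedes it below -/
import Mathlib

section
/- If H is a subgroup of G = Z_2^{*∞} that is invariant under all finite identifications of letters and under conjugation by letters, and H contains some element whose reduced word has odd length, then H = G. -/
noncomputable section

abbrev Z2 : Type := Multiplicative (ZMod 2)
abbrev FP : Type := Monoid.CoprodI (fun _ : ℕ => Z2)

def gen (i : ℕ) : FP := Monoid.CoprodI.of (i := i) (Multiplicative.ofAdd (1 : ZMod 2))

def par : FP →* Z2 := Monoid.CoprodI.lift (fun _ => MonoidHom.id Z2)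

/-- The subgroup of even-length words. -/
def Ev : Subgroup FP := par.ker

/-- Endomorphism of `FP` identifying letters according to `f`. -/
def ident (f : ℕ → ℕ) : FP →* FP :=
  Monoid.CoprodI.lift (fun i => (Monoid.CoprodI.of (M := fun _ : ℕ => Z2) (i := f i)))

/-- `f` moves only finitely many letters. -/
def FinSupp (f : ℕ → ℕ) : Prop := ∃ n, ∀ k ≥ n, f k = k

/-- S₀-invariance. -/
def S0Inv (H : Subgroup FP) : Prop :=
  (∀ f : ℕ → ℕ, FinSupp f → ∀ x ∈ H, ident f x ∈ H) ∧
  (∀ k : ℕ, ∀ x ∈ H, gen k * x * gen k ∈ H)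

/-- Length of the reduced word of `x`. -/
def wlen (x : FP) : ℕ := (Monoid.CoprodI.Word.equiv x).toList.length

/-- Number of occurrences of the letter `i` in the reduced word of `x`. -/
def occ (x : FP) (i : ℕ) : ℕ :=
  ((Monoid.CoprodI.Word.equiv x).toList.map Sigma.fst).count i

/-! Collapsing every letter occurring in `x` onto `a₀` sends `x` to `a₀ ^ wlen x`, and the parity
of the reduced length is the homomorphism `par`; so for odd length `a₀ ∈ H`. Renaming `a₀` to
`aᵢ` then puts every generator into `H`. -/

open Monoid.CoprodI

lemma ident_gen (f : ℕ → ℕ) (i : ℕ) : ident f (gen i) = gen (f i) := by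
  simp [ident, gen]

lemma par_of {i : ℕ} (m : Z2) : par (of (M := fun _ : ℕ => Z2) (i := i) m) = m := by
  simp [par]

lemma Z2.eq_ofAdd_one_of_ne_one : ∀ m : Z2, m ≠ 1 → m = Multiplicative.ofAdd 1 := by
  decide

lemma par_eq_ofAdd_wlen (x : FP) : par x = Multiplicative.ofAdd (wlen x : ZMod 2) := by
  set w := Word.equiv x
  have hx : x = w.prod := (Word.equiv.symm_apply_apply x).symm
  have hletters : w.toList.map (fun l => l.2) =
      List.replicate w.toList.length (Multiplicative.ofAdd (1 : ZMod 2)) := by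
    refine List.eq_replicate_iff.2 ⟨List.length_map _, fun m hm => ?_⟩
    obtain ⟨l, hl, rfl⟩ := List.mem_map.1 hm
    exact Z2.eq_ofAdd_one_of_ne_one _ (w.ne_one l hl)
  calc par x = (w.toList.map fun l => l.2).prod := by
        rw [hx, Word.prod, map_list_prod, List.map_map]
        simp only [Function.comp_def, par_of]
    _ = Multiplicative.ofAdd (wlen x : ZMod 2) := by
        rw [hletters, List.prod_replicate, ← ofAdd_nsmul, nsmul_one]
        rfl

def collapseBelow (n j : ℕ) : ℕ := if j < n then 0 else j

lemma finSupp_collapseBelow (n : ℕ) : FinSupp (collapseBelow n) :=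
  ⟨n, fun _ hk => if_neg (not_lt.2 hk)⟩

lemma finSupp_update_id (i j : ℕ) : FinSupp (Function.update id i j) :=
  ⟨i + 1, fun _ hk => Function.update_of_ne (by omega) _ _⟩

lemma exists_ident_collapseBelow_eq (x : FP) :
    ∃ n, ∀ m ≥ n, ident (collapseBelow m) x = of (M := fun _ : ℕ => Z2) (i := 0) (par x) := by
  induction x using induction_on with
  | one => exact ⟨0, fun _ _ => by simp⟩
  | of i a =>
    refine ⟨i + 1, fun m hm => ?_⟩
    simp [ident, collapseBelow, par_of, show i < m by omega]
  | mul x y hx hy =>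
    obtain ⟨n₁, hn₁⟩ := hx
    obtain ⟨n₂, hn₂⟩ := hy
    refine ⟨max n₁ n₂, fun m hm => ?_⟩
    rw [map_mul, map_mul, map_mul, hn₁ m (le_of_max_le_left hm), hn₂ m (le_of_max_le_right hm)]

lemma eq_top_of_forall_gen_mem (H : Subgroup FP) (h : ∀ i, gen i ∈ H) : H = ⊤ := by
  refine (Subgroup.eq_top_iff' H).2 fun y => ?_
  induction y using induction_on with
  | one => exact H.one_mem
  | of i m =>
    by_cases hm : m = 1
    · rw [hm, map_one]; exact H.one_mem
    · rw [Z2.eq_ofAdd_one_of_ne_one m hm]; exact h i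
  | mul a b ha hb => exact H.mul_mem ha hb

/-- An S₀-invariant subgroup of `FP = ℤ₂^{*∞}` containing an element whose reduced
word has odd length is all of `FP`. -/
theorem stmt2 (H : Subgroup FP) (hinv : S0Inv H)
    (x : FP) (hx : x ∈ H) (hodd : Odd (wlen x)) : H = ⊤ := by
  obtain ⟨n, hn⟩ := exists_ident_collapseBelow_eq x
  have hpar : par x = Multiplicative.ofAdd 1 := by
    rw [par_eq_ofAdd_wlen, ZMod.natCast_eq_one_iff_odd.2 hodd]
  have h0 : gen 0 ∈ H := by
    have := hinv.1 _ (finSupp_collapseBelow n) x hx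
    rwa [hn n le_rfl, hpar] at this
  refine eq_top_of_forall_gen_mem H fun i => ?_
  simpa [ident_gen] using hinv.1 _ (finSupp_update_id 0 i) _ h0

end
end

section
/- If an S_0-invariant subgroup H ≤ E contains an element of the form a_i a_j with i ≠ j (a product of two distinct generators), then H = E. -/
noncomputable section

/-!
By identifying `i ↦ k`, `j ↦ l`, the subgroup `H` contains every product `gen k * gen l`.
Then every `x` satisfies `x ∈ H` or `gen 0 * x ∈ H`: multiplying on the left by a letter
`gen i` swaps the two options, because `gen 0 * gen i` and `gen i * gen 0` lie in `H`.
An even word `x` cannot satisfy `gen 0 * x ∈ H ≤ Ev`, so `Ev ≤ H`.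
-/

open Monoid.CoprodI

lemma of_eq_one_or_eq_gen (i : ℕ) (m : Z2) : of (M := fun _ : ℕ => Z2) (i := i) m = 1 ∨
    of (M := fun _ : ℕ => Z2) (i := i) m = gen i := by
  have : m = 1 ∨ m = Multiplicative.ofAdd 1 := by revert m; decide
  rcases this with rfl | rfl
  · exact Or.inl (map_one _)
  · exact Or.inr rfl

lemma gen_mul_self (i : ℕ) : gen i * gen i = 1 := by
  rw [gen, ← map_mul]
  exact map_one _

lemma par_gen_ne_one (i : ℕ) : par (gen i) ≠ 1 := by
  rw [par, gen, lift_of]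
  decide

lemma gen_mul_notMem_Ev {x : FP} (hx : x ∈ Ev) (k : ℕ) : gen k * x ∉ Ev := by
  simpa [Ev, MonoidHom.mem_ker.mp hx] using par_gen_ne_one k

lemma finSupp_ite_ite (i j k l : ℕ) :
    FinSupp fun x => if x = i then k else if x = j then l else x :=
  ⟨max i j + 1, fun m hm => by simp [show m ≠ i by omega, show m ≠ j by omega]⟩

lemma gen_mul_gen_mem_of_ident_mem {H : Subgroup FP}
    (hident : ∀ f : ℕ → ℕ, FinSupp f → ∀ x ∈ H, ident f x ∈ H)
    {i j : ℕ} (hij : i ≠ j) (hmem : gen i * gen j ∈ H) (k l : ℕ) : gen k * gen l ∈ H := by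
  have := hident _ (finSupp_ite_ite i j k l) _ hmem
  simpa [ident_gen, hij.symm] using this

lemma mem_or_gen_zero_mul_mem {H : Subgroup FP} (hpair : ∀ k l : ℕ, gen k * gen l ∈ H)
    (x : FP) : x ∈ H ∨ gen 0 * x ∈ H := by
  induction x using induction_left with
  | one => exact Or.inl H.one_mem
  | @mul i m x ih =>
    rcases of_eq_one_or_eq_gen i m with hm | hm <;> rw [hm]
    · rwa [one_mul]
    · rcases ih with hx | hx
      · exact Or.inr (mul_assoc (gen 0) (gen i) x ▸ H.mul_mem (hpair 0 i) hx)
      · refine Or.inl ?_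
        have := H.mul_mem (hpair i 0) hx
        rwa [mul_assoc, ← mul_assoc (gen 0), gen_mul_self, one_mul] at this

/-- If an S₀-invariant subgroup `H ≤ Ev` contains a product of two distinct letters,
then `H = Ev`. -/
theorem stmt5 (H : Subgroup FP) (hle : H ≤ Ev) (hinv : S0Inv H)
    (h : ∃ i j : ℕ, i ≠ j ∧ gen i * gen j ∈ H) : H = Ev := by
  obtain ⟨i, j, hij, hmem⟩ := h
  have hpair := gen_mul_gen_mem_of_ident_mem hinv.1 hij hmem
  refine le_antisymm hle fun x hx => ?_
  exact (mem_or_gen_zero_mul_mem hpair x).resolve_right fun h0 => gen_mul_notMem_Ev hx 0 (hle h0)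

end
end

section
/- The elements x_k := a_1 a_{k+1}, for k = 1, 2, ..., form a free basis of the subgroup E of even-length words in G = Z_2^{*∞}; in particular E is isomorphic to the free group on countably many generators. -/
noncomputable section

/-!
Sending `a₁ = gen 0` to an involution `σ` and `a_{k+1}` to `σ x_k` identifies `G` with the semidirect
product `F ⋊ ℤ/2` of the free group `F` on the `x_k` by the involution `σ` that inverts every
generator: the inverse map sends `σ ↦ a₁` and `x_k ↦ a₁ a_{k+1}`. Under this isomorphism `x_k` is
the `k`-th generator of `F` and the parity of a word is its image in `ℤ/2`, whose kernel is `F`.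
-/

open SemidirectProduct

namespace Z2

def σ : Z2 := Multiplicative.ofAdd 1

lemma eq_one_or_eq_σ (x : Z2) : x = 1 ∨ x = σ := by revert x; decide

lemma σ_ne_one : σ ≠ 1 := by decide

lemma σ_mul_σ : σ * σ = 1 := by decide

lemma hom_ext {H : Type*} [Monoid H] {f g : Z2 →* H} (h : f σ = g σ) : f = g := by
  refine MonoidHom.ext fun x => ?_
  rcases eq_one_or_eq_σ x with rfl | rfl
  · rw [map_one, map_one]
  · exact h

def lift {H : Type*} [Monoid H] (h : H) (hh : h * h = 1) : Z2 →* H where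
  toFun x := if x = 1 then 1 else h
  map_one' := if_pos rfl
  map_mul' x y := by
    rcases eq_one_or_eq_σ x with rfl | rfl <;> rcases eq_one_or_eq_σ y with rfl | rfl <;>
      simp [σ_mul_σ, σ_ne_one, hh]

@[simp]
lemma lift_σ {H : Type*} [Monoid H] (h : H) (hh : h * h = 1) : lift h hh σ = h :=
  show (if σ = 1 then 1 else h) = h from if_neg σ_ne_one

end Z2

namespace FreeGroup

variable {α : Type*}

def invOf : FreeGroup α →* FreeGroup α := lift fun a => (of a)⁻¹

@[simp]
lemma invOf_of (a : α) : invOf (of a) = (of a)⁻¹ := lift_apply_of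

lemma invOf_comp_invOf : invOf.comp invOf = MonoidHom.id (FreeGroup α) :=
  ext_hom _ _ fun a => by simp

def invOfAut : MulAut (FreeGroup α) :=
  invOf.toMulEquiv invOf invOf_comp_invOf invOf_comp_invOf

lemma invOfAut_mul_self : (invOfAut * invOfAut : MulAut (FreeGroup α)) = 1 :=
  MulEquiv.ext (DFunLike.congr_fun invOf_comp_invOf :)

def flipAction : Z2 →* MulAut (FreeGroup α) := Z2.lift invOfAut invOfAut_mul_self

@[simp]
lemma flipAction_σ_apply (x : FreeGroup α) : flipAction Z2.σ x = invOf x := by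
  rw [flipAction, Z2.lift_σ]; rfl

end FreeGroup

namespace SemidirectProduct

variable {G N K : Type*} [Group G] [Group N] [Group K] {φ : K →* MulAut N}

lemma injective_of_apply_eq_inl {e : G →* N ⋊[φ] K} {f : N →* G}
    (hf : ∀ n, e (f n) = inl n) : Function.Injective f :=
  fun a b hab => inl_injective (by rw [← hf, ← hf, hab])

lemma range_eq_ker_of_apply_eq_inl {e : G →* N ⋊[φ] K} (he : Function.Injective e)
    {f : N →* G} (hf : ∀ n, e (f n) = inl n) : f.range = (rightHom.comp e).ker := by
  ext x
  rw [MonoidHom.mem_ker, MonoidHom.comp_apply, ← MonoidHom.mem_ker, ← range_inl_eq_ker_rightHom]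
  constructor
  · rintro ⟨n, rfl⟩
    exact ⟨n, (hf n).symm⟩
  · rintro ⟨n, hn⟩
    exact ⟨n, he (by rw [hf, hn])⟩

end SemidirectProduct

namespace FP

lemma gen_eq_of_σ (i : ℕ) : gen i = Monoid.CoprodI.of (i := i) Z2.σ := rfl

lemma gen_mul_self (i : ℕ) : gen i * gen i = 1 := by
  rw [gen_eq_of_σ, ← map_mul, Z2.σ_mul_σ, map_one]

@[simp]
lemma gen_inv (i : ℕ) : (gen i)⁻¹ = gen i :=
  inv_eq_of_mul_eq_one_right (gen_mul_self i)

lemma hom_ext {H : Type*} [Monoid H] {f g : FP →* H} (h : ∀ i, f (gen i) = g (gen i)) :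
    f = g :=
  Monoid.CoprodI.ext_hom f g fun i => Z2.hom_ext (h i)

def lift {H : Type*} [Monoid H] (t : ℕ → H) (ht : ∀ i, t i * t i = 1) : FP →* H :=
  Monoid.CoprodI.lift fun i => Z2.lift (t i) (ht i)

@[simp]
lemma lift_gen {H : Type*} [Monoid H] (t : ℕ → H) (ht : ∀ i, t i * t i = 1) (i : ℕ) :
    lift t ht (gen i) = t i := by
  rw [lift, gen_eq_of_σ, Monoid.CoprodI.lift_of, Z2.lift_σ]

@[simp]
lemma par_gen (i : ℕ) : par (gen i) = Z2.σ := by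
  rw [par, gen_eq_of_σ, Monoid.CoprodI.lift_of, MonoidHom.id_apply]

open FreeGroup (flipAction)

def evenBasis : FreeGroup ℕ →* FP := FreeGroup.lift fun k => gen 0 * gen (k + 1)

@[simp]
lemma evenBasis_of (k : ℕ) : evenBasis (FreeGroup.of k) = gen 0 * gen (k + 1) :=
  FreeGroup.lift_apply_of

def semidirectLetter : ℕ → FreeGroup ℕ ⋊[flipAction] Z2
  | 0 => inr Z2.σ
  | k + 1 => inr Z2.σ * inl (FreeGroup.of k)

lemma semidirectLetter_mul_self (i : ℕ) : semidirectLetter i * semidirectLetter i = 1 := by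
  cases i <;> ext <;> simp [semidirectLetter, Z2.σ_mul_σ]

def toSemidirect : FP →* FreeGroup ℕ ⋊[flipAction] Z2 :=
  lift semidirectLetter semidirectLetter_mul_self

lemma toSemidirect_evenBasis (w : FreeGroup ℕ) : toSemidirect (evenBasis w) = inl w := by
  suffices h : toSemidirect.comp evenBasis = inl from DFunLike.congr_fun h w
  refine FreeGroup.ext_hom _ _ fun k => ?_
  rw [MonoidHom.comp_apply, evenBasis_of, map_mul, toSemidirect, lift_gen, lift_gen]
  change inr Z2.σ * (inr Z2.σ * inl _) = _
  rw [← mul_assoc, ← map_mul, Z2.σ_mul_σ, map_one, one_mul]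

lemma rightHom_comp_toSemidirect : rightHom.comp toSemidirect = par :=
  hom_ext fun i => by cases i <;> simp [toSemidirect, semidirectLetter]

def ofSemidirect : FreeGroup ℕ ⋊[flipAction] Z2 →* FP :=
  SemidirectProduct.lift evenBasis (Z2.lift (gen 0) (gen_mul_self 0)) fun g => by
    rcases Z2.eq_one_or_eq_σ g with rfl | rfl
    · ext w
      simp
    · refine FreeGroup.ext_hom _ _ fun k => ?_
      simp [← mul_assoc, gen_mul_self]

lemma ofSemidirect_toSemidirect (x : FP) : ofSemidirect (toSemidirect x) = x := by
  suffices h : ofSemidirect.comp toSemidirect = MonoidHom.id FP from DFunLike.congr_fun h x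
  refine hom_ext fun i => ?_
  cases i <;> simp [toSemidirect, semidirectLetter, ofSemidirect, ← mul_assoc, gen_mul_self]

end FP

/-- The elements `x_k = a₁ a_{k+1}` form a free basis of the even-length subgroup `Ev`:
the homomorphism from the free group on countably many generators sending the `k`-th
generator to `x_k` is injective with range `Ev`. In particular `Ev` is free on
countably many generators. -/
theorem stmt6 :
    Function.Injective (FreeGroup.lift (fun k : ℕ => gen 0 * gen (k + 1)) : FreeGroup ℕ →* FP) ∧
    (FreeGroup.lift (fun k : ℕ => gen 0 * gen (k + 1)) : FreeGroup ℕ →* FP).range = Ev := by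
  show Function.Injective FP.evenBasis ∧ FP.evenBasis.range = Ev
  have hinj : Function.Injective FP.toSemidirect :=
    Function.LeftInverse.injective FP.ofSemidirect_toSemidirect
  refine ⟨SemidirectProduct.injective_of_apply_eq_inl FP.toSemidirect_evenBasis, ?_⟩
  rw [SemidirectProduct.range_eq_ker_of_apply_eq_inl hinj FP.toSemidirect_evenBasis,
    FP.rightHom_comp_toSemidirect]
  rfl

end
end

section
/- Every S-invariant subgroup H of F_∞ is generated, as an S-invariant subgroup, by the element x_1^s together with H ∩ [F_∞, F_∞], where s is the minimal positive integer with x_1^s ∈ H (if no such integer exists, by H ∩ [F_∞, F_∞] alone). That is, H is the smallest S-invariant subgroup containing x_1^s and H ∩ [F_∞,F_∞]. -/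
noncomputable section

abbrev F : Type := FreeGroup ℕ

/-- `f` moves only finitely many letters. -/
def FinSuppF (f : ℕ → ℕ) : Prop := ∃ n, ∀ k ≥ n, f k = k

/-- The endomorphism of `F` identifying letters according to `f`. -/
def identF (f : ℕ → ℕ) : Monoid.End F :=
  (FreeGroup.lift (fun k => FreeGroup.of (f k)) : F →* F)

/-- The endomorphism `x_k ↦ x_i⁻¹ x_k`. -/
def shiftF (i : ℕ) : Monoid.End F :=
  (FreeGroup.lift (fun k => (FreeGroup.of i)⁻¹ * FreeGroup.of k) : F →* F)

/-- The endomorphism deleting the letter `j` (sending `x_j` to `1`). -/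
def delF (j : ℕ) : Monoid.End F :=
  (FreeGroup.lift (fun k => if k = j then 1 else FreeGroup.of k) : F →* F)

/-- The endomorphism `x_k ↦ x_k⁻¹` for all `k`. -/
def invF : Monoid.End F :=
  (FreeGroup.lift (fun k => (FreeGroup.of k)⁻¹) : F →* F)

/-- The generating set of the semigroup `S ⊆ End(F_∞)`: finite identifications of
letters, the maps `x_k ↦ x_i⁻¹ x_k`, deletions of letters, the global inversion
`x_k ↦ x_k⁻¹`, and all inner automorphisms. -/
def SGen : Set (Monoid.End F) :=
  {φ | (∃ f : ℕ → ℕ, FinSuppF f ∧ φ = identF f) ∨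
       (∃ i : ℕ, φ = shiftF i) ∨
       (∃ j : ℕ, φ = delF j) ∨
       φ = invF ∨
       (∃ g : F, φ = ((MulAut.conj g : F ≃* F) : F →* F))}

/-- The semigroup `S` of endomorphisms of `F_∞`. -/
def S : Subsemigroup (Monoid.End F) := Subsemigroup.closure SGen

/-- A subgroup is `S`-invariant if it is preserved by every element of `S`. -/
def SInv (H : Subgroup F) : Prop := ∀ φ ∈ S, ∀ x ∈ H, φ x ∈ H

/-- Exponent sum of the letter `i` in a word of `F`. -/
def expSum (i : ℕ) : F →* Multiplicative ℤ :=
  FreeGroup.lift (fun k => if k = i then Multiplicative.ofAdd (1 : ℤ) else 1)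

/-! If `x` lies in an `S`-invariant `K`, so does `x_i ^ e_i(x)` for every letter `i`, where `e_i`
is the exponent sum: identify the other letters of `x` with a fresh one and delete it. Swapping
`x_i` with `x_1` shows that these powers are controlled by the exponents `t` with `x_1 ^ t ∈ K`.
Dividing `x` by the product of its letter powers leaves an element with all exponent sums zero,
i.e. an element of `[F_∞, F_∞]`. Hence `H` lies in every `S`-invariant `K` containing
`H ∩ [F_∞, F_∞]` and every `x_1 ^ t ∈ H`; those `t` are the multiples of `s`, and only `0` when
there is no `s`. -/

open FreeGroup (of lift_apply_of)

lemma identF_mem_S {f : ℕ → ℕ} (hf : FinSuppF f) : identF f ∈ S :=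
  Subsemigroup.subset_closure (Or.inl ⟨f, hf, rfl⟩)

lemma delF_mem_S (j : ℕ) : delF j ∈ S :=
  Subsemigroup.subset_closure (Or.inr (Or.inr (Or.inl ⟨j, rfl⟩)))

lemma identF_of (f : ℕ → ℕ) (k : ℕ) : identF f (of k) = of (f k) := lift_apply_of

lemma delF_of (j k : ℕ) : delF j (of k) = if k = j then 1 else of k := lift_apply_of

lemma exists_mem_closure_image_of_Iio (x : F) : ∃ N, x ∈ Subgroup.closure (of '' Set.Iio N) := by
  induction x using FreeGroup.induction_on with
  | C1 => exact ⟨0, one_mem _⟩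
  | of k => exact ⟨k + 1, Subgroup.subset_closure ⟨k, k.lt_succ_self, rfl⟩⟩
  | inv_of k ih =>
    obtain ⟨N, hN⟩ := ih
    exact ⟨N, inv_mem hN⟩
  | mul x y hx hy =>
    obtain ⟨N, hN⟩ := hx
    obtain ⟨M, hM⟩ := hy
    have mono {n m : ℕ} (h : n ≤ m) :=
      Subgroup.closure_mono (Set.image_mono (f := of) (Set.Iio_subset_Iio h))
    exact ⟨max N M, mul_mem (mono (le_max_left N M) hN) (mono (le_max_right N M) hM)⟩

def letterPow (i : ℕ) : F →* F := (zpowersHom F (of i)).comp (expSum i)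

lemma letterPow_of (i k : ℕ) : letterPow i (of k) = if k = i then of i else 1 := by
  by_cases h : k = i <;> simp [letterPow, expSum, h]

namespace SInv

variable {K : Subgroup F}

lemma letterPow_mem (hK : SInv K) {x : F} (hx : x ∈ K) (i : ℕ) : letterPow i x ∈ K := by
  obtain ⟨N, hN⟩ := exists_mem_closure_image_of_Iio x
  set M := max N (i + 1)
  let f : ℕ → ℕ := fun k => if k = i then i else if k < M then M else k
  have hf : FinSuppF f := ⟨M, fun k hk => by simp only [f]; split_ifs <;> omega⟩
  have hx' : x ∈ Subgroup.closure (of '' Set.Iio M) :=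
    Subgroup.closure_mono (Set.image_mono (Set.Iio_subset_Iio (le_max_left N _))) hN
  have key : (delF M * identF f) x = letterPow i x := by
    refine MonoidHom.eqOn_closure (f := delF M * identF f) ?_ hx'
    rintro _ ⟨k, hk, rfl⟩
    change delF M (identF f (of k)) = _
    rw [identF_of, delF_of, letterPow_of]
    simp only [Set.mem_Iio] at hk
    by_cases hki : k = i
    · subst hki
      simp [f, hk.ne]
    · simp [f, hki, hk]
  exact key ▸ hK _ (S.mul_mem (delF_mem_S M) (identF_mem_S hf)) x hx

lemma zpow_of_mem (hK : SInv K) {i : ℕ} {t : ℤ} (h : of i ^ t ∈ K) (j : ℕ) : of j ^ t ∈ K := by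
  have hf : FinSuppF (Equiv.swap i j) :=
    ⟨max i j + 1, fun k hk => Equiv.swap_apply_of_ne_of_ne (by omega) (by omega)⟩
  have := hK _ (identF_mem_S hf) _ h
  rwa [map_zpow, identF_of, Equiv.swap_apply_left] at this

end SInv

lemma mul_inv_prod_letterPow_mem_commutator {x : F} {N : ℕ}
    (hx : x ∈ Subgroup.closure (of '' Set.Iio N)) :
    x * ((List.range N).map (letterPow · x)).prod⁻¹ ∈ commutator F := by
  let ψ : F →* Abelianization F := ∏ i ∈ Finset.range N, Abelianization.of.comp (letterPow i)
  have hψ : ψ x = Abelianization.of x := by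
    refine MonoidHom.eqOn_closure (f := ψ) ?_ hx
    rintro _ ⟨k, hk, rfl⟩
    simp [ψ, letterPow_of, apply_ite, Set.mem_Iio.mp hk]
  rw [← Abelianization.ker_of, MonoidHom.mem_ker, map_mul, map_inv, map_list_prod,
    List.map_map, ← hψ]
  simp only [ψ, MonoidHom.finsetProd_apply, MonoidHom.comp_apply]
  rw [mul_inv_eq_one, Finset.prod_eq_multiset_prod]
  rfl

lemma SInv.le_of_inf_commutator_le {H K : Subgroup F} (hH : SInv H) (hK : SInv K)
    (hcomm : H ⊓ commutator F ≤ K) (hpow : ∀ t : ℤ, of 0 ^ t ∈ H → of 0 ^ t ∈ K) : H ≤ K := by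
  intro x hx
  obtain ⟨N, hN⟩ := exists_mem_closure_image_of_Iio x
  set w := ((List.range N).map (letterPow · x)).prod
  have hwH : w ∈ H := list_prod_mem (by simpa using fun i _ => hH.letterPow_mem hx i)
  have hwK : w ∈ K := list_prod_mem <| by
    simp only [List.mem_map, List.mem_range]
    rintro _ ⟨i, -, rfl⟩
    exact hK.zpow_of_mem (hpow _ (hH.zpow_of_mem (hH.letterPow_mem hx i) 0)) i
  have hxw : x * w⁻¹ ∈ K := hcomm <|
    Subgroup.mem_inf.mpr ⟨mul_mem hx (inv_mem hwH), mul_inv_prod_letterPow_mem_commutator hN⟩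
  simpa using mul_mem hxw hwK

namespace Subgroup

variable {G : Type*} [Group G] {H : Subgroup G} {g : G}

lemma natCast_dvd_of_zpow_mem {s : ℕ} (hs_pos : 0 < s) (hs : g ^ s ∈ H)
    (hmin : ∀ t : ℕ, 0 < t → g ^ t ∈ H → s ≤ t) {t : ℤ} (ht : g ^ t ∈ H) : (s : ℤ) ∣ t := by
  have hrem : g ^ (t % s) ∈ H := by
    have : g ^ (t % s) = g ^ t * ((g ^ s) ^ (t / s))⁻¹ := by
      rw [← zpow_natCast, ← zpow_mul, ← zpow_sub, Int.emod_def]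
    exact this ▸ mul_mem ht (inv_mem (zpow_mem hs _))
  by_contra hndvd
  have hpos : 0 < t % s := lt_of_le_of_ne (Int.emod_nonneg _ (by omega))
    (Ne.symm fun h => hndvd (Int.dvd_of_emod_eq_zero h))
  have hle := hmin (t % s).toNat (by omega) (by rwa [← zpow_natCast, Int.toNat_of_nonneg hpos.le])
  have hlt := Int.emod_lt_of_pos t (by omega : (0 : ℤ) < s)
  omega

lemma eq_zero_of_zpow_mem (hnone : ¬ ∃ s : ℕ, 0 < s ∧ g ^ s ∈ H) {t : ℤ} (ht : g ^ t ∈ H) :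
    t = 0 := by
  by_contra ht0
  refine hnone ⟨t.natAbs, Int.natAbs_pos.mpr ht0, ?_⟩
  rcases Int.natAbs_eq t with h | h
  · rwa [h, zpow_natCast] at ht
  · rwa [h, zpow_neg, zpow_natCast, inv_mem_iff] at ht

end Subgroup

/-- Every `S`-invariant subgroup `H` of `F_∞` is generated, as an `S`-invariant
subgroup, by `x_1^s` (with `s` minimal such that `x_1^s ∈ H`) together with
`H ∩ [F_∞, F_∞]`; if no such `s` exists, by `H ∩ [F_∞, F_∞]` alone. -/
theorem stmt12 (H : Subgroup F) (hH : SInv H) :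
    (∀ s : ℕ, 0 < s → (FreeGroup.of 0) ^ s ∈ H →
        (∀ t : ℕ, 0 < t → (FreeGroup.of 0) ^ t ∈ H → s ≤ t) →
      H = sInf {K : Subgroup F |
        SInv K ∧ (FreeGroup.of 0) ^ s ∈ K ∧ (H ⊓ commutator F : Subgroup F) ≤ K}) ∧
    ((¬ ∃ s : ℕ, 0 < s ∧ (FreeGroup.of 0) ^ s ∈ H) →
      H = sInf {K : Subgroup F |
        SInv K ∧ (H ⊓ commutator F : Subgroup F) ≤ K}) := by
  refine ⟨fun s hs_pos hs hmin => le_antisymm ?_ (sInf_le ⟨hH, hs, inf_le_left⟩),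
    fun hnone => le_antisymm ?_ (sInf_le ⟨hH, inf_le_left⟩)⟩
  · refine le_sInf fun K ⟨hK, hsK, hcomm⟩ => hH.le_of_inf_commutator_le hK hcomm fun t ht => ?_
    obtain ⟨m, rfl⟩ := Subgroup.natCast_dvd_of_zpow_mem hs_pos hs hmin ht
    rw [zpow_mul, zpow_natCast]
    exact zpow_mem hsK m
  · refine le_sInf fun K ⟨hK, hcomm⟩ => hH.le_of_inf_commutator_le hK hcomm fun t ht => ?_
    rw [Subgroup.eq_zero_of_zpow_mem hnone ht, zpow_zero]
    exact one_mem K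

end
end
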